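/- Let Ω ⊆ ℝⁿ be open and let 0 < λ₁ < λ₂ < 1. Then a function f : Ω → ℝˡ belongs to 1-AC_{λ₁} if and only if it belongs to 1-AC_{λ₂}; that is, the class 1-AC_λ is independent of λ ∈ (0,1). -/

import Mathlib

open MeasureTheory Metric Set Filter

noncomputable section

/-- The closed interval (box) `[a,b]` in `ℝⁿ`. -/
def box {n : ℕ} (a b : EuclideanSpace ℝ (Fin n)) : Set (EuclideanSpace ℝ (Fin n)) :=
  {x | ∀ ν, a ν ≤ x ν ∧ x ν ≤ b ν}

/-- `f ∈ 1-AC_λ` on `Ω`: for every `ε > 0` there is `δ > 0` such that for every finite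
collection of pairwise disjoint 1-regular intervals `[aᵢ,bᵢ] ⊆ Ω` (i.e. cubes, those with
`ℒⁿ([aᵢ,bᵢ]) ≥ (max_ν |aᵢ,ν − bᵢ,ν|)ⁿ`), `∑ ℒⁿ([aᵢ,bᵢ]) < δ` implies
`∑ |f(dᵢ) − f(cᵢ)|ⁿ < ε`, where `[cᵢ,dᵢ] = ^λ[aᵢ,bᵢ]` is the interval with the same
center `(aᵢ+bᵢ)/2` and side lengths `λ(bᵢ,ν − aᵢ,ν)`. -/
def OneACl {n l : ℕ} (lam : ℝ) (f : EuclideanSpace ℝ (Fin n) → EuclideanSpace ℝ (Fin l))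
    (Ω : Set (EuclideanSpace ℝ (Fin n))) : Prop :=
  ∀ ε > 0, ∃ δ > 0, ∀ (k : ℕ) (a b : Fin k → EuclideanSpace ℝ (Fin n)),
    (∀ i, ∀ ν, a i ν ≤ b i ν) →
    (∀ i, box (a i) (b i) ⊆ Ω) →
    (Pairwise fun i j => Disjoint (box (a i) (b i)) (box (a j) (b j))) →
    (∀ i, (⨆ ν, |a i ν - b i ν|) ^ n ≤ (volume (box (a i) (b i))).toReal) →
    ∑ i, (volume (box (a i) (b i))).toReal < δ →
    ∑ i, ‖f ((1/2 : ℝ) • (a i + b i) + (lam/2) • (b i - a i)) -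
          f ((1/2 : ℝ) • (a i + b i) - (lam/2) • (b i - a i))‖ ^ n < ε

/-!
Let `s, t > 0` with `t < 1` and `f ∈ 1-AC_s`. Split the diagonal segment of `^t[a,b]` into `m`
equal pieces. Each piece is the diagonal of the `s`-shrinking of a cube inside `[a,b]` with side
ratio `t / (m s)` (the cube fits once `m` is large), and for each fixed `j` these cubes form again
a disjoint family of cubes in `Ω`, of total volume `(t / (m s))ⁿ` times the original one. Applying
`1-AC_s` to each of the `m` families and `‖∑_{j<m} x_j‖ⁿ ≤ mⁿ ∑_{j<m} ‖x_j‖ⁿ` gives `f ∈ 1-AC_t`.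
-/

lemma norm_sub_pow_le_mul_sum_norm_sub_pow {E : Type*} [SeminormedAddCommGroup E] (g : ℕ → E)
    {m : ℕ} (hm : m ≠ 0) (n : ℕ) :
    ‖g m - g 0‖ ^ n ≤ (m : ℝ) ^ n * ∑ j ∈ Finset.range m, ‖g (j + 1) - g j‖ ^ n := by
  rw [← Finset.sum_range_sub g m]
  cases n with
  | zero => simpa using Nat.one_le_iff_ne_zero.mpr hm
  | succ p =>
    calc ‖∑ j ∈ Finset.range m, (g (j + 1) - g j)‖ ^ (p + 1)
        ≤ (∑ j ∈ Finset.range m, ‖g (j + 1) - g j‖) ^ (p + 1) := by gcongr; exact norm_sum_le _ _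
      _ ≤ (m : ℝ) ^ p * ∑ j ∈ Finset.range m, ‖g (j + 1) - g j‖ ^ (p + 1) := by
        simpa only [Finset.card_range] using
          pow_sum_le_card_mul_sum_pow (s := Finset.range m) (fun j _ => norm_nonneg _) p
      _ ≤ (m : ℝ) ^ (p + 1) * ∑ j ∈ Finset.range m, ‖g (j + 1) - g j‖ ^ (p + 1) := by
        gcongr
        · exact_mod_cast Nat.one_le_iff_ne_zero.mpr hm
        · omega

lemma sum_norm_sub_pow_lt_of_forall_sum_lt {ι E : Type*} [SeminormedAddCommGroup E]
    (S : Finset ι) (g : ι → ℕ → E) {m n : ℕ} (hm : m ≠ 0) {ε : ℝ}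
    (hstep : ∀ j ∈ Finset.range m, ∑ i ∈ S, ‖g i (j + 1) - g i j‖ ^ n < ε / m ^ (n + 1)) :
    ∑ i ∈ S, ‖g i m - g i 0‖ ^ n < ε :=
  calc ∑ i ∈ S, ‖g i m - g i 0‖ ^ n
      ≤ ∑ i ∈ S, (m : ℝ) ^ n * ∑ j ∈ Finset.range m, ‖g i (j + 1) - g i j‖ ^ n :=
        Finset.sum_le_sum fun i _ => norm_sub_pow_le_mul_sum_norm_sub_pow (g i) hm n
    _ = (m : ℝ) ^ n * ∑ j ∈ Finset.range m, ∑ i ∈ S, ‖g i (j + 1) - g i j‖ ^ n := by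
        rw [← Finset.mul_sum, Finset.sum_comm]
    _ < (m : ℝ) ^ n * ∑ j ∈ Finset.range m, ε / m ^ (n + 1) := by
        gcongr ?_ * ?_
        exact Finset.sum_lt_sum_of_nonempty (Finset.nonempty_range_iff.mpr hm) hstep
    _ = ε := by
        rw [Finset.sum_const, Finset.card_range, nsmul_eq_mul]
        field_simp
        ring

section Box

variable {n : ℕ}

lemma volume_box_toReal {a b : EuclideanSpace ℝ (Fin n)} (hab : ∀ ν, a ν ≤ b ν) :
    (volume (box a b)).toReal = ∏ ν, (b ν - a ν) := by
  have hpi : box a b = (MeasurableEquiv.toLp 2 (Fin n → ℝ)).symm ⁻¹'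
      (Set.univ.pi fun ν => Icc (a ν) (b ν)) := by
    ext x; simp [box, Set.mem_pi, Icc]
  rw [hpi, (EuclideanSpace.volume_preserving_symm_measurableEquiv_toLp (Fin n)).measure_preimage
    (MeasurableSet.univ_pi fun ν => measurableSet_Icc).nullMeasurableSet, volume_pi_pi]
  simp only [Real.volume_Icc, ENNReal.toReal_prod]
  exact Finset.prod_congr rfl fun ν _ => ENNReal.toReal_ofReal (sub_nonneg.mpr (hab ν))

/-- The point of the diagonal of `[a,b]` with coordinate `c`: `-1/2 ↦ a`, `0 ↦` center,
`1/2 ↦ b`. -/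
def boxPoint (c : ℝ) (a b : EuclideanSpace ℝ (Fin n)) : EuclideanSpace ℝ (Fin n) :=
  (1 / 2 : ℝ) • (a + b) + c • (b - a)

variable {a b : EuclideanSpace ℝ (Fin n)}

lemma boxPoint_apply (c : ℝ) (ν : Fin n) :
    boxPoint c a b ν = (a ν + b ν) / 2 + c * (b ν - a ν) := by
  simp only [boxPoint, PiLp.add_apply, PiLp.smul_apply, PiLp.sub_apply, smul_eq_mul]
  ring

lemma half_smul_add_sub_smul_sub (c : ℝ) :
    (1 / 2 : ℝ) • (a + b) - c • (b - a) = boxPoint (-c) a b := by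
  rw [boxPoint, neg_smul, sub_eq_add_neg]

lemma boxPoint_sub_boxPoint_apply (c d : ℝ) (ν : Fin n) :
    boxPoint d a b ν - boxPoint c a b ν = (d - c) * (b ν - a ν) := by
  rw [boxPoint_apply, boxPoint_apply]; ring

lemma half_smul_boxPoint_add_add_smul (p r s : ℝ) :
    (1 / 2 : ℝ) • (boxPoint (p - r / 2) a b + boxPoint (p + r / 2) a b) +
      (s / 2) • (boxPoint (p + r / 2) a b - boxPoint (p - r / 2) a b)
      = boxPoint (p + s * r / 2) a b := by
  simp only [boxPoint]; match_scalars <;> ring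

lemma half_smul_boxPoint_add_sub_smul (p r s : ℝ) :
    (1 / 2 : ℝ) • (boxPoint (p - r / 2) a b + boxPoint (p + r / 2) a b) -
      (s / 2) • (boxPoint (p + r / 2) a b - boxPoint (p - r / 2) a b)
      = boxPoint (p - s * r / 2) a b := by
  simp only [boxPoint]; match_scalars <;> ring

variable {p r : ℝ}

lemma boxPoint_le_boxPoint (hab : ∀ ν, a ν ≤ b ν) (hr : 0 ≤ r) (ν : Fin n) :
    boxPoint (p - r / 2) a b ν ≤ boxPoint (p + r / 2) a b ν := by
  have := boxPoint_sub_boxPoint_apply (a := a) (b := b) (p - r / 2) (p + r / 2) ν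
  nlinarith [hab ν]

lemma box_boxPoint_subset (hab : ∀ ν, a ν ≤ b ν) (hpr : |p| + r / 2 ≤ 1 / 2) :
    box (boxPoint (p - r / 2) a b) (boxPoint (p + r / 2) a b) ⊆ box a b := by
  intro x hx ν
  obtain ⟨hlow, hupp⟩ := hx ν
  rw [boxPoint_apply] at hlow hupp
  obtain ⟨hp₁, hp₂⟩ := abs_le.mp (show |p| ≤ 1 / 2 - r / 2 by linarith)
  have hw := sub_nonneg.mpr (hab ν)
  constructor <;> nlinarith [mul_le_mul_of_nonneg_right hp₁ hw, mul_le_mul_of_nonneg_right hp₂ hw]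

lemma volume_box_boxPoint_toReal (hab : ∀ ν, a ν ≤ b ν) (hr : 0 ≤ r) :
    (volume (box (boxPoint (p - r / 2) a b) (boxPoint (p + r / 2) a b))).toReal
      = r ^ n * (volume (box a b)).toReal := by
  rw [volume_box_toReal (boxPoint_le_boxPoint hab hr), volume_box_toReal hab]
  simp_rw [boxPoint_sub_boxPoint_apply, add_sub_sub_cancel, add_halves]
  rw [Finset.prod_mul_distrib, Finset.prod_const, Finset.card_univ, Fintype.card_fin]

lemma iSup_abs_boxPoint_sub_boxPoint (hr : 0 ≤ r) :
    ⨆ ν, |boxPoint (p - r / 2) a b ν - boxPoint (p + r / 2) a b ν| = r * ⨆ ν, |a ν - b ν| := by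
  rw [Real.mul_iSup_of_nonneg hr]
  congr 1; funext ν
  rw [abs_sub_comm, boxPoint_sub_boxPoint_apply, add_sub_sub_cancel, add_halves, abs_mul,
    abs_of_nonneg hr, abs_sub_comm]

end Box

variable {n l : ℕ} {Ω : Set (EuclideanSpace ℝ (Fin n))}
  {f : EuclideanSpace ℝ (Fin n) → EuclideanSpace ℝ (Fin l)} {s t : ℝ}

/-- The condition of `1-AC_s` applied to the family of cubes
`[boxPoint (p - r/2), boxPoint (p + r/2)] ⊆ [aᵢ,bᵢ]`. -/
lemma OneACl.exists_subbox_sum_lt (H : OneACl s f Ω) {ε : ℝ} (hε : 0 < ε) :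
    ∃ δ > 0, ∀ (k : ℕ) (a b : Fin k → EuclideanSpace ℝ (Fin n)),
      (∀ i, ∀ ν, a i ν ≤ b i ν) →
      (∀ i, box (a i) (b i) ⊆ Ω) →
      (Pairwise fun i j => Disjoint (box (a i) (b i)) (box (a j) (b j))) →
      (∀ i, (⨆ ν, |a i ν - b i ν|) ^ n ≤ (volume (box (a i) (b i))).toReal) →
      ∀ p r, 0 ≤ r → |p| + r / 2 ≤ 1 / 2 →
      r ^ n * ∑ i, (volume (box (a i) (b i))).toReal < δ →
      ∑ i, ‖f (boxPoint (p + s * r / 2) (a i) (b i)) -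
          f (boxPoint (p - s * r / 2) (a i) (b i))‖ ^ n < ε := by
  obtain ⟨δ, hδ, Hδ⟩ := H ε hε
  refine ⟨δ, hδ, fun k a b hab hΩ hdisj hreg p r hr hpr hvol => ?_⟩
  have hsub i := box_boxPoint_subset (hab i) hpr
  have key := Hδ k (fun i => boxPoint (p - r / 2) (a i) (b i))
    (fun i => boxPoint (p + r / 2) (a i) (b i)) (fun i => boxPoint_le_boxPoint (hab i) hr)
    (fun i => (hsub i).trans (hΩ i)) (fun i j hij => (hdisj hij).mono (hsub i) (hsub j))
    (fun i => by
      rw [iSup_abs_boxPoint_sub_boxPoint hr, mul_pow,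
        volume_box_boxPoint_toReal (hab i) hr]
      exact mul_le_mul_of_nonneg_left (hreg i) (by positivity))
    (by simpa only [volume_box_boxPoint_toReal (hab _) hr, ← Finset.mul_sum] using hvol)
  simpa only [half_smul_boxPoint_add_add_smul, half_smul_boxPoint_add_sub_smul] using key

lemma OneACl.of_oneACl (H : OneACl s f Ω) (hs : 0 < s) (ht₀ : 0 < t) (ht₁ : t < 1) :
    OneACl t f Ω := by
  intro ε hε
  obtain ⟨m, hm⟩ := exists_nat_gt (t / s / (1 - t))
  have hm₀ : (0 : ℝ) < m := (div_pos (div_pos ht₀ hs) (sub_pos.mpr ht₁)).trans hm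
  set h := t / m with hh_def
  have hh : 0 < h := div_pos ht₀ hm₀
  have hmh : m * h = t := mul_div_cancel₀ t hm₀.ne'
  have hfit : h / s ≤ 1 - t := by
    rw [div_lt_iff₀ (sub_pos.mpr ht₁)] at hm
    rw [hh_def, div_right_comm, div_le_iff₀ hm₀]
    linarith
  obtain ⟨δ, hδ, Hδ⟩ := H.exists_subbox_sum_lt (ε := ε / m ^ (n + 1)) (by positivity)
  refine ⟨δ / (h / s) ^ n, by positivity, fun k a b hab hΩ hdisj hreg hvol => ?_⟩
  obtain ⟨x, hx⟩ : ∃ x : ℕ → ℝ, ∀ j, x j = -(t / 2) + j * h := ⟨_, fun _ => rfl⟩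
  have hx_succ j : x (j + 1) = x j + h := by rw [hx, hx]; push_cast; ring
  have hstep : ∀ j ∈ Finset.range m, ∑ i, ‖f (boxPoint (x (j + 1)) (a i) (b i)) -
      f (boxPoint (x j) (a i) (b i))‖ ^ n < ε / m ^ (n + 1) := by
    intro j hj
    have hjm : (j : ℝ) + 1 ≤ m := by exact_mod_cast Finset.mem_range.mp hj
    have hsr : s * (h / s) / 2 = h / 2 := by field_simp
    have hcenter : |x j + h / 2| ≤ 1 / 2 - h / s / 2 := by
      rw [hx]
      refine abs_le.mpr ⟨?_, ?_⟩
      · nlinarith [mul_nonneg j.cast_nonneg hh.le]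
      · nlinarith [mul_le_mul_of_nonneg_right hjm hh.le]
    have key := Hδ k a b hab hΩ hdisj hreg (x j + h / 2) (h / s) (by positivity) (by linarith) (by
      calc (h / s) ^ n * ∑ i, (volume (box (a i) (b i))).toReal
          < (h / s) ^ n * (δ / (h / s) ^ n) := by gcongr
        _ = δ := by field_simp)
    rwa [hsr, add_sub_cancel_right, add_assoc, add_halves, ← hx_succ] at key
  have hx_zero : x 0 = -(t / 2) := by simp [hx]
  have hx_m : x m = t / 2 := by rw [hx, hmh]; ring
  have key := sum_norm_sub_pow_lt_of_forall_sum_lt Finset.univ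
    (fun i j => f (boxPoint (x j) (a i) (b i))) (by exact_mod_cast hm₀.ne') hstep
  rw [hx_zero, hx_m] at key
  simp only [half_smul_add_sub_smul_sub]
  exact key

theorem oneACl_lambda_independent_general {n l : ℕ}
    (Ω : Set (EuclideanSpace ℝ (Fin n)))
    (lam₁ lam₂ : ℝ) (h₁ : 0 < lam₁) (h₁₂ : lam₁ < lam₂) (h₂ : lam₂ < 1)
    (f : EuclideanSpace ℝ (Fin n) → EuclideanSpace ℝ (Fin l)) :
    OneACl lam₁ f Ω ↔ OneACl lam₂ f Ω :=
  ⟨fun H => H.of_oneACl h₁ (h₁.trans h₁₂) h₂,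
    fun H => H.of_oneACl (h₁.trans h₁₂) h₁ (h₁₂.trans h₂)⟩

/-- For `0 < λ₁ < λ₂ < 1`, a function `f : Ω → ℝˡ` belongs to `1-AC_{λ₁}` if and only if it
belongs to `1-AC_{λ₂}`: the class `1-AC_λ` is independent of `λ ∈ (0,1)`. -/
theorem oneACl_lambda_independent {n l : ℕ}
    (Ω : Set (EuclideanSpace ℝ (Fin n))) (hΩopen : IsOpen Ω)
    (lam₁ lam₂ : ℝ) (h₁ : 0 < lam₁) (h₁₂ : lam₁ < lam₂) (h₂ : lam₂ < 1)
    (f : EuclideanSpace ℝ (Fin n) → EuclideanSpace ℝ (Fin l)) :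
    OneACl lam₁ f Ω ↔ OneACl lam₂ f Ω :=
  oneACl_lambda_independent_general Ω lam₁ lam₂ h₁ h₁₂ h₂ f
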